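/- arXiv:2205.11850 — 3 statements merged into one kernel-verified Lean document; each statement's English description precedes it below -/
import Mathlib

section
/- Let d : ℕ, let μ be a probability measure on Fin d → ℝ, let h : (Fin d → ℝ) → ℝ be a function and x : Fin d → ℝ a point, and set δ(ε) = h(x) − h(x − ε). Assume δ is measurable, ε ↦ (δ ε)² is μ-integrable, and ε ↦ ‖ε‖² is μ-integrable. Define M : Matrix (Fin d) (Fin d) ℝ by M i j = ∫ (ε i) * (ε j) dμ(ε) and b : Fin d → ℝ by b i = ∫ (δ ε) * (ε i) dμ(ε). If M is invertible, then Φ* := M⁻¹.mulVec b minimizes the unfaithfulness Δ(Φ) = ∫ (Φ ⬝ᵥ ε − δ ε)² dμ(ε), i.e. Δ(Φ*) ≤ Δ(Φ) for every Φ : Fin d → ℝ. -/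
open MeasureTheory Matrix

/-!
The normal equations `M Φ* = b` say exactly that the residual `Φ* ⬝ᵥ ε - δ ε` is orthogonal in
`L²(μ)` to every coordinate `ε i`, hence to every linear form `v ⬝ᵥ ε`. Writing
`Φ = Φ* + (Φ - Φ*)`, Pythagoras gives `Δ(Φ) = Δ(Φ*) + ∫ ((Φ - Φ*) ⬝ᵥ ε)² dμ ≥ Δ(Φ*)`.
This is ordinary least squares, and works verbatim for any finite family of `L²` features `f a i`
in place of the coordinates.
-/

section LeastSquares

variable {α ι : Type*} [MeasurableSpace α] [Fintype ι] {μ : Measure α} {f : α → ι → ℝ}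

lemma memLp_dotProduct {p : ENNReal} (hf : ∀ i, MemLp (fun a => f a i) p μ) (v : ι → ℝ) :
    MemLp (fun a => v ⬝ᵥ f a) p μ := by
  simpa [dotProduct] using memLp_finsetSum Finset.univ fun i _ => (hf i).const_mul (v i)

lemma integral_mul_dotProduct {φ : α → ℝ} (hφ : MemLp φ 2 μ)
    (hf : ∀ i, MemLp (fun a => f a i) 2 μ) (v : ι → ℝ) :
    ∫ a, φ a * (v ⬝ᵥ f a) ∂μ = v ⬝ᵥ fun i => ∫ a, φ a * f a i ∂μ := by
  simp_rw [dotProduct, Finset.mul_sum, mul_left_comm (φ _)]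
  rw [integral_finsetSum _ fun i _ => ?_]
  · simp_rw [integral_const_mul]
  · exact (hφ.integrable_mul (hf i)).const_mul (v i)

variable {g : α → ℝ} {M : Matrix ι ι ℝ} {b w : ι → ℝ}

lemma integral_residual_mul_eq_zero (hf : ∀ i, MemLp (fun a => f a i) 2 μ) (hg : MemLp g 2 μ)
    (hM : ∀ i j, M i j = ∫ a, f a i * f a j ∂μ) (hb : ∀ i, b i = ∫ a, g a * f a i ∂μ)
    (hw : M *ᵥ w = b) (i : ι) :
    ∫ a, (w ⬝ᵥ f a - g a) * f a i ∂μ = 0 := by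
  have hfit : ∫ a, f a i * (w ⬝ᵥ f a) ∂μ = b i := by
    rw [integral_mul_dotProduct (hf i) hf, ← hw, mulVec, dotProduct_comm]
    exact congrArg (· ⬝ᵥ w) (funext fun j => (hM i j).symm)
  simp_rw [sub_mul]
  rw [integral_sub ?_ ?_, ← hb]
  · simp_rw [mul_comm (w ⬝ᵥ _)]
    rw [hfit, sub_self]
  · exact (memLp_dotProduct hf w).integrable_mul (hf i)
  · exact hg.integrable_mul (hf i)

lemma integral_sq_sub_eq_add_of_orthogonal (hf : ∀ i, MemLp (fun a => f a i) 2 μ)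
    (hg : MemLp g 2 μ) (horth : ∀ i, ∫ a, (w ⬝ᵥ f a - g a) * f a i ∂μ = 0) (v : ι → ℝ) :
    ∫ a, (v ⬝ᵥ f a - g a) ^ 2 ∂μ =
      ∫ a, (w ⬝ᵥ f a - g a) ^ 2 ∂μ + ∫ a, ((v - w) ⬝ᵥ f a) ^ 2 ∂μ := by
  have hres : MemLp (fun a => w ⬝ᵥ f a - g a) 2 μ := (memLp_dotProduct hf w).sub hg
  have hcross : ∫ a, (w ⬝ᵥ f a - g a) * ((v - w) ⬝ᵥ f a) ∂μ = 0 := by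
    rw [integral_mul_dotProduct hres hf]
    simp [horth]
  have hexpand : ∀ a, (v ⬝ᵥ f a - g a) ^ 2 = (w ⬝ᵥ f a - g a) ^ 2 +
      (2 * ((w ⬝ᵥ f a - g a) * ((v - w) ⬝ᵥ f a)) + ((v - w) ⬝ᵥ f a) ^ 2) := by
    intro a; rw [sub_dotProduct]; ring
  have hprod : Integrable (fun a => (w ⬝ᵥ f a - g a) * ((v - w) ⬝ᵥ f a)) μ :=
    hres.integrable_mul (memLp_dotProduct hf _)
  have hsq : Integrable (fun a => ((v - w) ⬝ᵥ f a) ^ 2) μ := (memLp_dotProduct hf _).integrable_sq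
  simp_rw [hexpand]
  rw [integral_add hres.integrable_sq ?_, integral_add (hprod.const_mul 2) hsq,
    integral_const_mul, hcross, mul_zero, zero_add]
  exact (hprod.const_mul 2).add hsq

theorem integral_sq_sub_le_of_mulVec_eq (hf : ∀ i, MemLp (fun a => f a i) 2 μ)
    (hg : MemLp g 2 μ) (hM : ∀ i j, M i j = ∫ a, f a i * f a j ∂μ)
    (hb : ∀ i, b i = ∫ a, g a * f a i ∂μ) (hw : M *ᵥ w = b) (v : ι → ℝ) :
    ∫ a, (w ⬝ᵥ f a - g a) ^ 2 ∂μ ≤ ∫ a, (v ⬝ᵥ f a - g a) ^ 2 ∂μ := by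
  rw [integral_sq_sub_eq_add_of_orthogonal hf hg (integral_residual_mul_eq_zero hf hg hM hb hw) v]
  exact le_add_of_nonneg_right (integral_nonneg fun a => sq_nonneg _)

end LeastSquares

theorem optimal_linear_attribution_general
    (d : ℕ) (μ : Measure (Fin d → ℝ))
    (δ : (Fin d → ℝ) → ℝ)
    (hδmeas : Measurable δ)
    (hδ2 : Integrable (fun ε => (δ ε) ^ 2) μ)
    (hnorm : Integrable (fun ε => ‖ε‖ ^ 2) μ)
    (M : Matrix (Fin d) (Fin d) ℝ)
    (hM : ∀ i j, M i j = ∫ ε, ε i * ε j ∂μ)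
    (b : Fin d → ℝ) (hb : ∀ i, b i = ∫ ε, δ ε * ε i ∂μ)
    (hMinv : IsUnit M) :
    ∀ Φ : Fin d → ℝ,
      (∫ ε, ((M⁻¹.mulVec b) ⬝ᵥ ε - δ ε) ^ 2 ∂μ) ≤ ∫ ε, (Φ ⬝ᵥ ε - δ ε) ^ 2 ∂μ := by
  have hcoord : ∀ i, MemLp (fun ε : Fin d → ℝ => ε i) 2 μ :=
    ((memLp_two_iff_integrable_sq_norm aestronglyMeasurable_id).mpr hnorm).eval
  have hδ : MemLp δ 2 μ := (memLp_two_iff_integrable_sq hδmeas.aestronglyMeasurable).mpr hδ2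
  have hnormal : M *ᵥ (M⁻¹ *ᵥ b) = b := by
    rw [mulVec_mulVec, mul_nonsing_inv M ((isUnit_iff_isUnit_det M).mp hMinv), one_mulVec]
  exact integral_sq_sub_le_of_mulVec_eq (f := id) hcoord hδ hM hb hnormal

/-- The optimal linear feature attribution `Φ* = M⁻¹ b` minimizes the unfaithfulness
`Δ(Φ) = ∫ (Φ ⬝ᵥ ε − (h x − h (x − ε)))² dμ`. -/
theorem optimal_linear_attribution
    (d : ℕ) (μ : Measure (Fin d → ℝ)) [IsProbabilityMeasure μ]
    (h : (Fin d → ℝ) → ℝ) (x : Fin d → ℝ)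
    (δ : (Fin d → ℝ) → ℝ) (hδ : δ = fun ε => h x - h (x - ε))
    (hδmeas : Measurable δ)
    (hδ2 : Integrable (fun ε => (δ ε) ^ 2) μ)
    (hnorm : Integrable (fun ε => ‖ε‖ ^ 2) μ)
    (M : Matrix (Fin d) (Fin d) ℝ)
    (hM : ∀ i j, M i j = ∫ ε, ε i * ε j ∂μ)
    (b : Fin d → ℝ) (hb : ∀ i, b i = ∫ ε, δ ε * ε i ∂μ)
    (hMinv : IsUnit M) :
    ∀ Φ : Fin d → ℝ,
      (∫ ε, ((M⁻¹.mulVec b) ⬝ᵥ ε - δ ε) ^ 2 ∂μ) ≤ ∫ ε, (Φ ⬝ᵥ ε - δ ε) ^ 2 ∂μ :=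
  optimal_linear_attribution_general d μ δ hδmeas hδ2 hnorm M hM b hb hMinv
end

section
/- Let n d M : ℕ with M ≥ 1. For a matrix B : Matrix (Fin n) (Fin n) ℝ define the degree vector deg(B) i = ∑ j, (B + 1) i j and the normalization N(B) = diagonal (fun i => (Real.sqrt (deg(B) i))⁻¹) * (B + 1) * diagonal (fun i => (Real.sqrt (deg(B) i))⁻¹). Fix an input (X, A) with all entries of A nonnegative, a selection vector e : Fin n → ℝ, a function F : Matrix (Fin n) (Fin d) ℝ × Matrix (Fin n) (Fin n) ℝ → ℝ, and a probability measure μ on perturbations (εX, εA) ∈ Matrix (Fin n) (Fin d) ℝ × Matrix (Fin n) (Fin n) ℝ. For k = 1, …, M define τ_k : Ω → (Fin d → ℝ) by τ_k (εX, εA) = Matrix.vecMul e (N(A^k) * X − N((A − εA)^k) * (X − εX)), let φ : Ω → (Fin M × Fin d → ℝ) be the stacked vector φ (ε) (k, i) = τ_k (ε) i, and let δ (εX, εA) = F(X, A) − F(X − εX, A − εA). Assume φ and δ are measurable, ω ↦ ‖φ ω‖² and ω ↦ (δ ω)² are μ-integrable. Let 𝕄 be the matrix 𝕄 (k,i) (l,j)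 = ∫ φ ε (k,i) * φ ε (l,j) dμ and b (k,i) = ∫ δ ε * φ ε (k,i) dμ. If 𝕄 is invertible, then W* := 𝕄⁻¹.mulVec b minimizes the general unfaithfulness Δ(W) = ∫ ( (∑ k, τ_k ε ⬝ᵥ (fun i => W (k, i))) − δ ε )² dμ(ε) of the KEC model p_W(X, A) = ∑ k, (Matrix.vecMul e (N(A^k) * X)) ⬝ᵥ (fun i => W (k,i)), i.e. Δ(W*) ≤ Δ(W) for all W : Fin M × Fin d → ℝ. -/
open MeasureTheory Matrix

instance matrixMeasurableSpace {m k : Type*} : MeasurableSpace (Matrix m k ℝ) :=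
  (inferInstance : MeasurableSpace (m → k → ℝ))

/-- Product of two functions with integrable squares is integrable. -/
lemma integrable_mul_of_sq {α : Type*} [MeasurableSpace α] {μ : Measure α} {f g : α → ℝ}
    (hf : Measurable f) (hg : Measurable g)
    (hf2 : Integrable (fun x => f x ^ 2) μ) (hg2 : Integrable (fun x => g x ^ 2) μ) :
    Integrable (fun x => f x * g x) μ := by
  have hint : Integrable (fun x => (f x ^ 2 + g x ^ 2) / 2) μ := (hf2.add hg2).div_const 2
  refine hint.mono' ((hf.mul hg).aestronglyMeasurable) ?_
  filter_upwards with x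
  rw [Real.norm_eq_abs, abs_mul]
  nlinarith [sq_nonneg (|f x| - |g x|), sq_abs (f x), sq_abs (g x),
    abs_nonneg (f x), abs_nonneg (g x)]

/-- Prop. 3: the optimal parameters `W* = 𝕄⁻¹ b` of the KEC local difference model
`p_W(X, A) = ∑_{k=1}^{M} eᵀ N(A^k) X w_k` minimize the general unfaithfulness `Δ(W)`.
Here `k = 1, …, M` is represented by `k : Fin M` with power `k + 1`. -/
theorem kec_optimal_parameters
    (n d M : ℕ) (hM : 1 ≤ M)
    (X : Matrix (Fin n) (Fin d) ℝ) (A : Matrix (Fin n) (Fin n) ℝ)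
    (hA : ∀ i j, 0 ≤ A i j)
    (e : Fin n → ℝ)
    (F : Matrix (Fin n) (Fin d) ℝ × Matrix (Fin n) (Fin n) ℝ → ℝ)
    (μ : Measure (Matrix (Fin n) (Fin d) ℝ × Matrix (Fin n) (Fin n) ℝ))
    [IsProbabilityMeasure μ]
    -- degree vector of `B + 1` and the normalization `N(B) = D^{-1/2} (B + I) D^{-1/2}`
    (deg : Matrix (Fin n) (Fin n) ℝ → Fin n → ℝ)
    (hdeg : ∀ B i, deg B i = ∑ j, (B + 1) i j)
    (Nrm : Matrix (Fin n) (Fin n) ℝ → Matrix (Fin n) (Fin n) ℝ)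
    (hNrm : ∀ B, Nrm B =
      Matrix.diagonal (fun i => (Real.sqrt (deg B i))⁻¹) * (B + 1) *
        Matrix.diagonal (fun i => (Real.sqrt (deg B i))⁻¹))
    -- the k-hop difference features
    (τ : Fin M → Matrix (Fin n) (Fin d) ℝ × Matrix (Fin n) (Fin n) ℝ → Fin d → ℝ)
    (hτ : ∀ k ε, τ k ε =
      Matrix.vecMul e (Nrm (A ^ ((k : ℕ) + 1)) * X -
        Nrm ((A - ε.2) ^ ((k : ℕ) + 1)) * (X - ε.1)))
    -- the stacked feature vector
    (φ : Matrix (Fin n) (Fin d) ℝ × Matrix (Fin n) (Fin n) ℝ → Fin M × Fin d → ℝ)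
    (hφ : ∀ ε p, φ ε p = τ p.1 ε p.2)
    -- the difference of the target GNN
    (δ : Matrix (Fin n) (Fin d) ℝ × Matrix (Fin n) (Fin n) ℝ → ℝ)
    (hδ : ∀ ε, δ ε = F (X, A) - F (X - ε.1, A - ε.2))
    (hφmeas : Measurable φ) (hδmeas : Measurable δ)
    (hφ2 : Integrable (fun ε => ‖φ ε‖ ^ 2) μ)
    (hδ2 : Integrable (fun ε => (δ ε) ^ 2) μ)
    (𝕄 : Matrix (Fin M × Fin d) (Fin M × Fin d) ℝ)
    (h𝕄 : ∀ p q, 𝕄 p q = ∫ ε, φ ε p * φ ε q ∂μ)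
    (b : Fin M × Fin d → ℝ)
    (hb : ∀ p, b p = ∫ ε, δ ε * φ ε p ∂μ)
    (h𝕄inv : IsUnit 𝕄) :
    ∀ W : Fin M × Fin d → ℝ,
      (∫ ε, ((∑ k, τ k ε ⬝ᵥ (fun i => (𝕄⁻¹.mulVec b) (k, i))) - δ ε) ^ 2 ∂μ) ≤
        ∫ ε, ((∑ k, τ k ε ⬝ᵥ (fun i => W (k, i))) - δ ε) ^ 2 ∂μ := by
  classical
  intro W
  set W0 : Fin M × Fin d → ℝ := 𝕄⁻¹.mulVec b with hW0
  set g : (Fin M × Fin d → ℝ) → (Matrix (Fin n) (Fin d) ℝ × Matrix (Fin n) (Fin n) ℝ) → ℝ :=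
    fun V ε => ∑ p, V p * φ ε p with hg
  -- rewrite the model as a dot product with the stacked features
  have hrw : ∀ (V : Fin M × Fin d → ℝ) ε,
      (∑ k, τ k ε ⬝ᵥ (fun i => V (k, i))) = g V ε := by
    intro V ε
    simp only [hg, dotProduct, Fintype.sum_prod_type]
    refine Finset.sum_congr rfl fun k _ => Finset.sum_congr rfl fun i _ => ?_
    rw [hφ]; ring
  -- measurability and integrability facts
  have hφmp : ∀ p, Measurable fun ε => φ ε p := fun p =>
    (measurable_pi_apply p).comp hφmeas
  have hφp2 : ∀ p, Integrable (fun ε => (φ ε p) ^ 2) μ := by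
    intro p
    refine hφ2.mono (((hφmp p).pow_const 2).aestronglyMeasurable) ?_
    filter_upwards with ε
    have h1 : |φ ε p| ≤ ‖φ ε‖ := by simpa using norm_le_pi_norm (φ ε) p
    have h2 : (φ ε p) ^ 2 ≤ ‖φ ε‖ ^ 2 := by nlinarith [sq_abs (φ ε p), abs_nonneg (φ ε p)]
    have h3 : (0:ℝ) ≤ ‖φ ε‖ ^ 2 := by positivity
    simpa [Real.norm_eq_abs, abs_of_nonneg (sq_nonneg (φ ε p)), abs_of_nonneg h3] using h2
  have hmul : ∀ p q, Integrable (fun ε => φ ε p * φ ε q) μ := fun p q =>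
    integrable_mul_of_sq (hφmp p) (hφmp q) (hφp2 p) (hφp2 q)
  have hmulδ : ∀ p, Integrable (fun ε => δ ε * φ ε p) μ := fun p =>
    integrable_mul_of_sq hδmeas (hφmp p) hδ2 (hφp2 p)
  have hI1 : ∀ (V : Fin M × Fin d → ℝ),
      Integrable (fun ε => ∑ p, ∑ q, V p * V q * (φ ε p * φ ε q)) μ := by
    intro V
    refine integrable_finset_sum _ fun p _ => integrable_finset_sum _ fun q _ => ?_
    exact (hmul p q).const_mul _
  have hI2 : ∀ (V : Fin M × Fin d → ℝ),
      Integrable (fun ε => ∑ p, V p * (δ ε * φ ε p)) μ := by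
    intro V
    exact integrable_finset_sum _ fun p _ => (hmulδ p).const_mul _
  -- the quadratic expansion of the unfaithfulness
  have hexp : ∀ (V : Fin M × Fin d → ℝ),
      ∫ ε, (g V ε - δ ε) ^ 2 ∂μ
        = (∑ p, ∑ q, V p * V q * 𝕄 p q) - 2 * (∑ p, V p * b p) + ∫ ε, (δ ε) ^ 2 ∂μ := by
    intro V
    have hpt : ∀ ε, (g V ε - δ ε) ^ 2
        = ((∑ p, ∑ q, V p * V q * (φ ε p * φ ε q)) - 2 * (∑ p, V p * (δ ε * φ ε p)))
          + (δ ε) ^ 2 := by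
      intro ε
      have e1 : (g V ε) ^ 2 = ∑ p, ∑ q, V p * V q * (φ ε p * φ ε q) := by
        rw [sq, hg, Finset.sum_mul_sum]
        refine Finset.sum_congr rfl fun p _ => Finset.sum_congr rfl fun q _ => by ring
      have e2 : g V ε * δ ε = ∑ p, V p * (δ ε * φ ε p) := by
        rw [hg, Finset.sum_mul]
        exact Finset.sum_congr rfl fun p _ => by ring
      have : (g V ε - δ ε) ^ 2 = (g V ε) ^ 2 - 2 * (g V ε * δ ε) + (δ ε) ^ 2 := by ring
      rw [this, e1, e2]
    calc ∫ ε, (g V ε - δ ε) ^ 2 ∂μ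
        = ∫ ε, ((∑ p, ∑ q, V p * V q * (φ ε p * φ ε q))
            - 2 * (∑ p, V p * (δ ε * φ ε p))) + (δ ε) ^ 2 ∂μ := by
          exact integral_congr_ae (Filter.Eventually.of_forall hpt)
      _ = (∫ ε, (∑ p, ∑ q, V p * V q * (φ ε p * φ ε q))
            - 2 * (∑ p, V p * (δ ε * φ ε p)) ∂μ) + ∫ ε, (δ ε) ^ 2 ∂μ := by
          have hs : Integrable (fun ε => (∑ p, ∑ q, V p * V q * (φ ε p * φ ε q))
              - 2 * (∑ p, V p * (δ ε * φ ε p))) μ := (hI1 V).sub ((hI2 V).const_mul 2)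
          exact integral_add hs hδ2
      _ = ((∫ ε, ∑ p, ∑ q, V p * V q * (φ ε p * φ ε q) ∂μ)
            - ∫ ε, 2 * (∑ p, V p * (δ ε * φ ε p)) ∂μ) + ∫ ε, (δ ε) ^ 2 ∂μ := by
          rw [integral_sub (hI1 V) ((hI2 V).const_mul 2)]
      _ = (∑ p, ∑ q, V p * V q * 𝕄 p q) - 2 * (∑ p, V p * b p) + ∫ ε, (δ ε) ^ 2 ∂μ := by
          congr 2
          · rw [integral_finset_sum _ fun p _ =>
              (integrable_finset_sum _ fun q _ => (hmul p q).const_mul _)]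
            refine Finset.sum_congr rfl fun p _ => ?_
            rw [integral_finset_sum _ fun q _ => (hmul p q).const_mul _]
            refine Finset.sum_congr rfl fun q _ => ?_
            rw [integral_const_mul, h𝕄]
          · rw [integral_const_mul, integral_finset_sum _ fun p _ => (hmulδ p).const_mul _]
            congr 1
            refine Finset.sum_congr rfl fun p _ => ?_
            rw [integral_const_mul, hb]
  -- the quadratic form is positive semidefinite
  have hQpos : ∀ (V : Fin M × Fin d → ℝ), 0 ≤ ∑ p, ∑ q, V p * V q * 𝕄 p q := by
    intro V
    have e1 : ∀ ε, (g V ε) ^ 2 = ∑ p, ∑ q, V p * V q * (φ ε p * φ ε q) := by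
      intro ε
      rw [sq, hg, Finset.sum_mul_sum]
      exact Finset.sum_congr rfl fun p _ => Finset.sum_congr rfl fun q _ => by ring
    have : ∫ ε, (g V ε) ^ 2 ∂μ = ∑ p, ∑ q, V p * V q * 𝕄 p q := by
      rw [integral_congr_ae (Filter.Eventually.of_forall e1)]
      rw [integral_finset_sum _ fun p _ =>
        (integrable_finset_sum _ fun q _ => (hmul p q).const_mul _)]
      refine Finset.sum_congr rfl fun p _ => ?_
      rw [integral_finset_sum _ fun q _ => (hmul p q).const_mul _]
      refine Finset.sum_congr rfl fun q _ => ?_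
      rw [integral_const_mul, h𝕄]
    rw [← this]
    exact integral_nonneg fun ε => sq_nonneg _
  -- 𝕄 W0 = b
  have hsym : ∀ p q, 𝕄 p q = 𝕄 q p := by
    intro p q; rw [h𝕄, h𝕄]; simp [mul_comm]
  have hMW0 : ∀ p, ∑ q, 𝕄 p q * W0 q = b p := by
    have hdet : IsUnit 𝕄.det := (Matrix.isUnit_iff_isUnit_det 𝕄).mp h𝕄inv
    have h1 : 𝕄 * 𝕄⁻¹ = 1 := Matrix.mul_nonsing_inv 𝕄 hdet
    have h2 : 𝕄.mulVec W0 = b := by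
      rw [hW0, Matrix.mulVec_mulVec, h1, Matrix.one_mulVec]
    intro p
    have := congrFun h2 p
    simpa [Matrix.mulVec, dotProduct] using this
  -- key sums
  have e1 : ∑ p, ∑ q, W p * W0 q * 𝕄 p q = ∑ p, W p * b p := by
    refine Finset.sum_congr rfl fun p _ => ?_
    rw [← hMW0 p, Finset.mul_sum]
    exact Finset.sum_congr rfl fun q _ => by ring
  have e2 : ∑ p, ∑ q, W0 p * W q * 𝕄 p q = ∑ p, W p * b p := by
    rw [Finset.sum_comm]
    refine Finset.sum_congr rfl fun q _ => ?_
    rw [← hMW0 q, Finset.mul_sum]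
    exact Finset.sum_congr rfl fun p _ => by rw [hsym p q]; ring
  have e3 : ∑ p, ∑ q, W0 p * W0 q * 𝕄 p q = ∑ p, W0 p * b p := by
    refine Finset.sum_congr rfl fun p _ => ?_
    rw [← hMW0 p, Finset.mul_sum]
    exact Finset.sum_congr rfl fun q _ => by ring
  -- expand the quadratic form on W - W0
  have hQD := hQpos (fun p => W p - W0 p)
  have hDexp : ∑ p, ∑ q, (W p - W0 p) * (W q - W0 q) * 𝕄 p q
      = (∑ p, ∑ q, W p * W q * 𝕄 p q) - (∑ p, ∑ q, W p * W0 q * 𝕄 p q)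
        - (∑ p, ∑ q, W0 p * W q * 𝕄 p q) + (∑ p, ∑ q, W0 p * W0 q * 𝕄 p q) := by
    rw [← Finset.sum_sub_distrib, ← Finset.sum_sub_distrib, ← Finset.sum_add_distrib]
    refine Finset.sum_congr rfl fun p _ => ?_
    rw [← Finset.sum_sub_distrib, ← Finset.sum_sub_distrib, ← Finset.sum_add_distrib]
    exact Finset.sum_congr rfl fun q _ => by ring
  -- conclude
  have goal1 : (∫ ε, ((∑ k, τ k ε ⬝ᵥ (fun i => W0 (k, i))) - δ ε) ^ 2 ∂μ)
      = ∫ ε, (g W0 ε - δ ε) ^ 2 ∂μ := by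
    exact integral_congr_ae (Filter.Eventually.of_forall fun ε => by simp only [hrw])
  have goal2 : (∫ ε, ((∑ k, τ k ε ⬝ᵥ (fun i => W (k, i))) - δ ε) ^ 2 ∂μ)
      = ∫ ε, (g W ε - δ ε) ^ 2 ∂μ := by
    exact integral_congr_ae (Filter.Eventually.of_forall fun ε => by simp only [hrw])
  rw [goal1, goal2, hexp W0, hexp W]
  rw [hDexp, e1, e2, e3] at hQD
  linarith
end

section
/- Let n d h c : ℕ, N : Matrix (Fin n) (Fin n) ℝ, W₀ : Matrix (Fin d) (Fin h) ℝ, W₁ : Matrix (Fin h) (Fin c) ℝ, and let Λ₀ : Matrix (Fin n) (Fin h) ℝ and Λ₁ : Matrix (Fin n) (Fin c) ℝ have every entry equal to 0 or 1. The activation region P = {X : Matrix (Fin n) (Fin d) ℝ | for all i j, (Λ₀ i j = 1 → 0 ≤ (N * X * W₀) i j) ∧ (Λ₀ i j = 0 → (N * X * W₀) i j ≤ 0), and for all i j, (Λ₁ i j = 1 → 0 ≤ (N * relu(N * X * W₀) * W₁) i j) ∧ (Λ₁ i j = 0 → (N * relu(N * X * W₀) * W₁) i j ≤ 0)} is a convex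 subset of Matrix (Fin n) (Fin d) ℝ. -/
open Matrix

/-- Entrywise ReLU of a real matrix. -/
noncomputable def relu {m k : Type*} (Y : Matrix m k ℝ) : Matrix m k ℝ :=
  Y.map (fun t => max t 0)

/-- The activation region of a two-layer graph convolution network (the set of node-feature
matrices on which the 0/1 masks `Λ₀, Λ₁` describe the ReLU activation pattern) is a convex
subset of the space of node-feature matrices. -/
theorem activation_region_convex
    (n d h c : ℕ) (N : Matrix (Fin n) (Fin n) ℝ)
    (W₀ : Matrix (Fin d) (Fin h) ℝ) (W₁ : Matrix (Fin h) (Fin c) ℝ)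
    (Λ₀ : Matrix (Fin n) (Fin h) ℝ) (Λ₁ : Matrix (Fin n) (Fin c) ℝ)
    (hΛ₀ : ∀ i j, Λ₀ i j = 0 ∨ Λ₀ i j = 1)
    (hΛ₁ : ∀ i j, Λ₁ i j = 0 ∨ Λ₁ i j = 1)
    (P : Set (Matrix (Fin n) (Fin d) ℝ))
    (hP : P = {X |
      (∀ i j, (Λ₀ i j = 1 → 0 ≤ (N * X * W₀) i j) ∧
              (Λ₀ i j = 0 → (N * X * W₀) i j ≤ 0)) ∧
      (∀ i j, (Λ₁ i j = 1 → 0 ≤ (N * relu (N * X * W₀) * W₁) i j) ∧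
              (Λ₁ i j = 0 → (N * relu (N * X * W₀) * W₁) i j ≤ 0))}) :
    Convex ℝ P := by
  subst hP
  rintro X ⟨hX1, hX2⟩ Y ⟨hY1, hY2⟩ a b ha hb hab
  have hZ : N * (a • X + b • Y) * W₀ = a • (N * X * W₀) + b • (N * Y * W₀) := by
    simp [Matrix.mul_add, Matrix.add_mul, Matrix.mul_smul, Matrix.smul_mul]
  have hrelu : relu (N * (a • X + b • Y) * W₀)
      = a • relu (N * X * W₀) + b • relu (N * Y * W₀) := by
    ext i j
    simp only [relu, Matrix.map_apply, hZ, Matrix.add_apply, Matrix.smul_apply,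
      smul_eq_mul]
    rcases hΛ₀ i j with h0 | h1
    · have hx := (hX1 i j).2 h0
      have hy := (hY1 i j).2 h0
      rw [max_eq_right hx, max_eq_right hy, max_eq_right (by nlinarith)]
      ring
    · have hx := (hX1 i j).1 h1
      have hy := (hY1 i j).1 h1
      rw [max_eq_left hx, max_eq_left hy, max_eq_left (by positivity)]
  have hZ2 : N * relu (N * (a • X + b • Y) * W₀) * W₁
      = a • (N * relu (N * X * W₀) * W₁) + b • (N * relu (N * Y * W₀) * W₁) := by
    rw [hrelu]
    simp [Matrix.mul_add, Matrix.add_mul, Matrix.mul_smul, Matrix.smul_mul]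
  constructor
  · intro i j
    have hx := hX1 i j
    have hy := hY1 i j
    rw [hZ]
    simp only [Matrix.add_apply, Matrix.smul_apply, smul_eq_mul]
    exact ⟨fun h1 => by nlinarith [hx.1 h1, hy.1 h1],
           fun h0 => by nlinarith [hx.2 h0, hy.2 h0]⟩
  · intro i j
    have hx := hX2 i j
    have hy := hY2 i j
    rw [hZ2]
    simp only [Matrix.add_apply, Matrix.smul_apply, smul_eq_mul]
    exact ⟨fun h1 => by nlinarith [hx.1 h1, hy.1 h1],
           fun h0 => by nlinarith [hx.2 h0, hy.2 h0]⟩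
end
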